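/- Let Γ be a modular trek from Ω_A to Ω_B. If ω ∈ dom(D_M) and l ≥ D_M(ω), then the trek target set t_Γ(ω|l) is a nonempty subset of {η ∈ N : D_N(η) ≤ l} which is compact for the norm ‖·‖_N. -/

import Mathlib

open scoped ComplexOrder

noncomputable section

/-! ### Admissible functions -/

/-- A function `F : [0,∞)⁴ → [0,∞)` is admissible when it is nondecreasing in each argument
and dominates `x₁x₃ + x₂x₄`. -/
def Admissible (F : ℝ → ℝ → ℝ → ℝ → ℝ) : Prop :=
  (∀ x₁ x₂ x₃ x₄ y₁ y₂ y₃ y₄ : ℝ, 0 ≤ x₁ → 0 ≤ x₂ → 0 ≤ x₃ → 0 ≤ x₄ →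
      x₁ ≤ y₁ → x₂ ≤ y₂ → x₃ ≤ y₃ → x₄ ≤ y₄ → F x₁ x₂ x₃ x₄ ≤ F y₁ y₂ y₃ y₄) ∧
  (∀ x₁ x₂ x₃ x₄ : ℝ, 0 ≤ x₁ → 0 ≤ x₂ → 0 ≤ x₃ → 0 ≤ x₄ →
      x₁ * x₃ + x₂ * x₄ ≤ F x₁ x₂ x₃ x₄)

/-- An admissible triple `(F,G,H)`. -/
def AdmissibleTriple (F : ℝ → ℝ → ℝ → ℝ → ℝ) (G : ℝ → ℝ → ℝ → ℝ) (H : ℝ → ℝ → ℝ) : Prop :=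
  Admissible F ∧
  (∀ x y z x' y' z' : ℝ, 0 ≤ x → 0 ≤ y → 0 ≤ z → x ≤ x' → y ≤ y' → z ≤ z' →
      G x y z ≤ G x' y' z') ∧
  (∀ x y z : ℝ, 0 ≤ x → 0 ≤ y → 0 ≤ z → (x + y) * z ≤ G x y z) ∧
  (∀ x y x' y' : ℝ, 0 ≤ x → 0 ≤ y → x ≤ x' → y ≤ y' → H x y ≤ H x' y') ∧
  (∀ x y : ℝ, 0 ≤ x → 0 ≤ y → 2 * x * y ≤ H x y)

section ReIm

variable {A : Type*} [NormedRing A] [StarRing A] [NormedAlgebra ℂ A]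

/-- The real part `(a + a*)/2` of an element of a complex `*`-algebra. -/
def reEl (a : A) : A := (2⁻¹ : ℂ) • (a + star a)

/-- The imaginary part `(a - a*)/(2i)` of an element of a complex `*`-algebra. -/
def imEl (a : A) : A := ((2 * Complex.I)⁻¹ : ℂ) • (a - star a)

end ReIm

/-! ### States -/

/-- A state on a unital complex `*`-algebra: a linear functional which is unital
and positive. -/
structure CState (A : Type*) [NormedRing A] [StarRing A] [NormedAlgebra ℂ A] where
  toFun : A →ₗ[ℂ] ℂ
  map_one : toFun 1 = 1
  positive : ∀ a : A, 0 ≤ toFun (star a * a)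

/-- The topology induced by a distance function, generated by its open balls. -/
def ballTopology {X : Type*} (d : X → X → ℝ) : TopologicalSpace X :=
  TopologicalSpace.generateFrom {s | ∃ (x : X) (ε : ℝ), 0 < ε ∧ s = {y | d x y < ε}}

/-- The Hausdorff distance between two sets, relative to a distance function. -/
def hausDist {X : Type*} (d : X → X → ℝ) (S T : Set X) : ℝ :=
  max (sSup {r | ∃ x ∈ S, r = sInf {s | ∃ y ∈ T, s = d x y}})
      (sSup {r | ∃ y ∈ T, r = sInf {s | ∃ x ∈ S, s = d x y}})

/-- The diameter of a set relative to a distance function. -/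
def setDiam {X : Type*} (d : X → X → ℝ) (S : Set X) : ℝ :=
  sSup {r | ∃ x ∈ S, ∃ y ∈ S, r = d x y}

/-- The weak-* topology on the state space. -/
def stateWeakTopology (A : Type*) [NormedRing A] [StarRing A] [NormedAlgebra ℂ A] :
    TopologicalSpace (CState A) :=
  TopologicalSpace.induced (fun (φ : CState A) (a : A) => φ.toFun a) Pi.topologicalSpace

/-- The Monge-Kantorovich metric associated with a Lipschitz seminorm `L` with domain `dom`. -/
def mkDist {A : Type*} [NormedRing A] [StarRing A] [NormedAlgebra ℂ A]
    (dom : Set A) (L : A → ℝ) (φ ψ : CState A) : ℝ :=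
  sSup {r | ∃ a ∈ dom, L a ≤ 1 ∧ r = ‖φ.toFun a - ψ.toFun a‖}

/-- The 1-level set of a pivot is nonempty. -/
def pivotLevelNonempty {D : Type*} [NormedRing D] [StarRing D] [NormedAlgebra ℂ D]
    (x : D) : Prop :=
  ∃ φ : CState D,
    φ.toFun (star (1 - x) * (1 - x)) = 0 ∧ φ.toFun ((1 - x) * star (1 - x)) = 0

/-! ### Quasi-Leibniz quantum compact metric spaces -/

/-- An `F`-quasi-Leibniz quantum compact metric space structure on a unital C*-algebra `A`:
a Lipschitz seminorm `L` defined on a dense Jordan-Lie subalgebra `dom` of the self-adjoint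
part of `A`, vanishing exactly on `ℝ1`, lower semicontinuous, whose Monge-Kantorovich metric
metrizes the weak-* topology on the state space, and satisfying the `F`-quasi-Leibniz
inequality. -/
structure QLSpace (A : Type*) [NormedRing A] [StarRing A] [CStarRing A]
    [NormedAlgebra ℂ A] [StarModule ℂ A] [CompleteSpace A]
    (F : ℝ → ℝ → ℝ → ℝ → ℝ) where
  dom : Set A
  L : A → ℝ
  dom_selfAdjoint : ∀ a ∈ dom, IsSelfAdjoint a
  dom_dense : closure dom = {a : A | IsSelfAdjoint a}
  dom_add : ∀ a ∈ dom, ∀ b ∈ dom, a + b ∈ dom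
  dom_smul : ∀ (t : ℝ), ∀ a ∈ dom, (t : ℂ) • a ∈ dom
  dom_jordan : ∀ a ∈ dom, ∀ b ∈ dom, (2⁻¹ : ℂ) • (a * b + b * a) ∈ dom
  dom_lie : ∀ a ∈ dom, ∀ b ∈ dom, ((2 * Complex.I)⁻¹ : ℂ) • (a * b - b * a) ∈ dom
  one_mem : (1 : A) ∈ dom
  L_nonneg : ∀ a : A, 0 ≤ L a
  L_add : ∀ a ∈ dom, ∀ b ∈ dom, L (a + b) ≤ L a + L b
  L_smul : ∀ (t : ℝ), ∀ a ∈ dom, L ((t : ℂ) • a) = |t| * L a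
  L_eq_zero_iff : ∀ a ∈ dom, (L a = 0 ↔ ∃ t : ℝ, a = (t : ℂ) • (1 : A))
  lowerSemicontinuous : IsClosed {a : A | a ∈ dom ∧ L a ≤ 1}
  leibniz_jordan : ∀ a ∈ dom, ∀ b ∈ dom,
      L ((2⁻¹ : ℂ) • (a * b + b * a)) ≤ F ‖a‖ ‖b‖ (L a) (L b)
  leibniz_lie : ∀ a ∈ dom, ∀ b ∈ dom,
      L (((2 * Complex.I)⁻¹ : ℂ) • (a * b - b * a)) ≤ F ‖a‖ ‖b‖ (L a) (L b)
  mk_metrizes : ballTopology (mkDist dom L) = stateWeakTopology A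
/-! ### Metrized quantum vector bundles -/

/-- An `(F,G,H)`-metrized quantum vector bundle: a left Hilbert module `M` over a unital
C*-algebra `A` equipped with an `F`-quasi-Leibniz quantum compact metric space structure,
together with a D-norm `D` defined on a dense subspace `Ddom` of `M`, dominating the
C*-Hilbert norm, with compact unit ball, and satisfying the inner and modular quasi-Leibniz
inequalities with respect to `G` and `H`. -/
structure BundledMQVB (F : ℝ → ℝ → ℝ → ℝ → ℝ) (G : ℝ → ℝ → ℝ → ℝ) (H : ℝ → ℝ → ℝ) where
  A : Type
  [instRing : NormedRing A]
  [instStarRing : StarRing A]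
  [instCStar : CStarRing A]
  [instAlg : NormedAlgebra ℂ A]
  [instStarMod : StarModule ℂ A]
  [instComplete : CompleteSpace A]
  M : Type
  [instM : NormedAddCommGroup M]
  [instMC : Module ℂ M]
  [instMA : Module A M]
  [instTower : IsScalarTower ℂ A M]
  [instMComplete : CompleteSpace M]
  base : QLSpace A F
  inn : M → M → A
  Ddom : Set M
  D : M → ℝ
  inn_add_left : ∀ x y z : M, inn (x + y) z = inn x z + inn y z
  inn_smul_left : ∀ (a : A) (x y : M), inn (a • x) y = a * inn x y
  inn_smul_leftC : ∀ (c : ℂ) (x y : M), inn (c • x) y = c • inn x y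
  inn_star : ∀ x y : M, star (inn x y) = inn y x
  inn_pos : ∀ x : M, ∃ b : A, inn x x = star b * b
  inn_definite : ∀ x : M, inn x x = 0 → x = 0
  norm_eq : ∀ x : M, ‖x‖ = Real.sqrt ‖inn x x‖
  Ddom_dense : Dense Ddom
  Ddom_add : ∀ x ∈ Ddom, ∀ y ∈ Ddom, x + y ∈ Ddom
  Ddom_smul : ∀ (c : ℂ), ∀ x ∈ Ddom, c • x ∈ Ddom
  D_nonneg : ∀ x : M, 0 ≤ D x
  D_add : ∀ x ∈ Ddom, ∀ y ∈ Ddom, D (x + y) ≤ D x + D y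
  D_smul : ∀ (c : ℂ), ∀ x ∈ Ddom, D (c • x) = ‖c‖ * D x
  norm_le_D : ∀ x ∈ Ddom, ‖x‖ ≤ D x
  D_ball_compact : IsCompact {x : M | x ∈ Ddom ∧ D x ≤ 1}
  D_leibniz : ∀ a ∈ base.dom, ∀ x ∈ Ddom,
      a • x ∈ Ddom ∧ D (a • x) ≤ G ‖a‖ (base.L a) (D x)
  inn_leibniz : ∀ x ∈ Ddom, ∀ y ∈ Ddom,
      reEl (inn x y) ∈ base.dom ∧ imEl (inn x y) ∈ base.dom ∧
      base.L (reEl (inn x y)) ≤ H (D x) (D y) ∧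
      base.L (imEl (inn x y)) ≤ H (D x) (D y)

attribute [instance] BundledMQVB.instRing BundledMQVB.instStarRing BundledMQVB.instCStar
  BundledMQVB.instAlg BundledMQVB.instStarMod BundledMQVB.instComplete
  BundledMQVB.instM BundledMQVB.instMC BundledMQVB.instMA BundledMQVB.instTower
  BundledMQVB.instMComplete

variable {F : ℝ → ℝ → ℝ → ℝ → ℝ} {G : ℝ → ℝ → ℝ → ℝ} {H : ℝ → ℝ → ℝ}

/-- The closed ball of radius `r` for the D-norm of a metrized quantum vector bundle. -/
def BundledMQVB.Dball (Ω : BundledMQVB F G H) (r : ℝ) : Set Ω.M :=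
  {ω | ω ∈ Ω.Ddom ∧ Ω.D ω ≤ r}

/-- The modular Monge-Kantorovich metric of a metrized quantum vector bundle. -/
def BundledMQVB.mkD (Ω : BundledMQVB F G H) (x y : Ω.M) : ℝ :=
  sSup {r | ∃ ξ ∈ Ω.Ddom, Ω.D ξ ≤ 1 ∧ r = ‖Ω.inn x ξ - Ω.inn y ξ‖}

/-- The `A`-weak topology on the module of a metrized quantum vector bundle. -/
def BundledMQVB.aWeak (Ω : BundledMQVB F G H) : TopologicalSpace Ω.M :=
  TopologicalSpace.induced (fun (ω : Ω.M) (ξ : Ω.M) => Ω.inn ω ξ) Pi.topologicalSpace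
/-! ### Modular bridges -/

/-- A modular bridge between two metrized quantum vector bundles. -/
structure ModularBridge (ΩA ΩB : BundledMQVB F G H) where
  Dalg : Type
  [instDRing : NormedRing Dalg]
  [instDStarRing : StarRing Dalg]
  [instDCStar : CStarRing Dalg]
  [instDAlg : NormedAlgebra ℂ Dalg]
  [instDStarMod : StarModule ℂ Dalg]
  [instDComplete : CompleteSpace Dalg]
  J : Type
  [instJ : Nonempty J]
  pivot : Dalg
  piA : ΩA.A →⋆ₐ[ℂ] Dalg
  piB : ΩB.A →⋆ₐ[ℂ] Dalg
  piA_inj : Function.Injective piA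
  piB_inj : Function.Injective piB
  pivot_norm : ‖pivot‖ = 1
  levelSet_nonempty : pivotLevelNonempty pivot
  anchors : J → ΩA.M
  coanchors : J → ΩB.M
  anchors_mem : ∀ j, anchors j ∈ ΩA.Ddom
  anchors_le : ∀ j, ΩA.D (anchors j) ≤ 1
  coanchors_mem : ∀ j, coanchors j ∈ ΩB.Ddom
  coanchors_le : ∀ j, ΩB.D (coanchors j) ≤ 1

attribute [instance] ModularBridge.instDRing ModularBridge.instDStarRing
  ModularBridge.instDCStar ModularBridge.instDAlg ModularBridge.instDStarMod
  ModularBridge.instDComplete ModularBridge.instJ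

namespace ModularBridge

variable {ΩA ΩB : BundledMQVB F G H}

/-- The bridge seminorm of a modular bridge. -/
def bn (γ : ModularBridge ΩA ΩB) (a : ΩA.A) (b : ΩB.A) : ℝ :=
  ‖γ.piA a * γ.pivot - γ.pivot * γ.piB b‖

/-- The deck seminorm of a modular bridge. -/
def dn (γ : ModularBridge ΩA ΩB) (ω : ΩA.M) (η : ΩB.M) : ℝ :=
  ⨆ k : γ.J,
    max (γ.bn (ΩA.inn ω (γ.anchors k)) (ΩB.inn η (γ.coanchors k)))
        (γ.bn (ΩA.inn (γ.anchors k) ω) (ΩB.inn (γ.coanchors k) η))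

/-- The basic reach of a modular bridge. -/
def basicReach (γ : ModularBridge ΩA ΩB) : ℝ :=
  max
    (sSup {r | ∃ a ∈ ΩA.base.dom, ΩA.base.L a ≤ 1 ∧
        r = sInf {s | ∃ b ∈ ΩB.base.dom, ΩB.base.L b ≤ 1 ∧ s = γ.bn a b}})
    (sSup {r | ∃ b ∈ ΩB.base.dom, ΩB.base.L b ≤ 1 ∧
        r = sInf {s | ∃ a ∈ ΩA.base.dom, ΩA.base.L a ≤ 1 ∧ s = γ.bn a b}})

/-- The modular reach of a modular bridge. -/
def modularReach (γ : ModularBridge ΩA ΩB) : ℝ :=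
  ⨆ j : γ.J, γ.dn (γ.anchors j) (γ.coanchors j)

/-- The imprint of a modular bridge. -/
def imprint (γ : ModularBridge ΩA ΩB) : ℝ :=
  max (hausDist ΩA.mkD (Set.range γ.anchors) (ΩA.Dball 1))
      (hausDist ΩB.mkD (Set.range γ.coanchors) (ΩB.Dball 1))

/-- The reach of a modular bridge. -/
def reach (γ : ModularBridge ΩA ΩB) : ℝ :=
  max γ.basicReach (γ.modularReach + γ.imprint)

/-- The states of the bridge algebra in the 1-level set of the pivot. -/
def levelStates (γ : ModularBridge ΩA ΩB) : Set (CState γ.Dalg) :=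
  {φ | φ.toFun (star (1 - γ.pivot) * (1 - γ.pivot)) = 0 ∧
       φ.toFun ((1 - γ.pivot) * star (1 - γ.pivot)) = 0}

/-- The height of a modular bridge. -/
def height (γ : ModularBridge ΩA ΩB) : ℝ :=
  max
    (hausDist (mkDist ΩA.base.dom ΩA.base.L) (Set.univ : Set (CState ΩA.A))
      {ψ | ∃ φ ∈ γ.levelStates, ∀ a : ΩA.A, ψ.toFun a = φ.toFun (γ.piA a)})
    (hausDist (mkDist ΩB.base.dom ΩB.base.L) (Set.univ : Set (CState ΩB.A))
      {ψ | ∃ φ ∈ γ.levelStates, ∀ b : ΩB.A, ψ.toFun b = φ.toFun (γ.piB b)})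

/-- The length of a modular bridge. -/
def length (γ : ModularBridge ΩA ΩB) : ℝ := max γ.reach γ.height

/-- The `l`-modular target set of `ω` for a modular bridge. -/
def mtarget (γ : ModularBridge ΩA ΩB) (ω : ΩA.M) (l : ℝ) : Set ΩB.M :=
  {η | η ∈ ΩB.Ddom ∧ ΩB.D η ≤ l ∧ γ.dn ω η ≤ l * γ.reach}

/-- The `l`-target set of `a` for a modular bridge. -/
def atarget (γ : ModularBridge ΩA ΩB) (a : ΩA.A) (l : ℝ) : Set ΩB.A :=
  {b | b ∈ ΩB.base.dom ∧ ΩB.base.L b ≤ l ∧ γ.bn a b ≤ l * γ.basicReach}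

/-- The reverse of a modular bridge. -/
def reverse (γ : ModularBridge ΩA ΩB) : ModularBridge ΩB ΩA where
  Dalg := γ.Dalg
  J := γ.J
  pivot := star γ.pivot
  piA := γ.piB
  piB := γ.piA
  piA_inj := γ.piB_inj
  piB_inj := γ.piA_inj
  pivot_norm := by rw [norm_star]; exact γ.pivot_norm
  levelSet_nonempty := by
    obtain ⟨φ, h1, h2⟩ := γ.levelSet_nonempty
    refine ⟨φ, ?_, ?_⟩
    · have e1 : star ((1 : γ.Dalg) - star γ.pivot) = 1 - γ.pivot := by
        simp [star_sub]
      have e2 : (1 : γ.Dalg) - star γ.pivot = star (1 - γ.pivot) := by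
        simp [star_sub]
      rw [e1, e2]; exact h2
    · have e1 : star ((1 : γ.Dalg) - star γ.pivot) = 1 - γ.pivot := by
        simp [star_sub]
      have e2 : (1 : γ.Dalg) - star γ.pivot = star (1 - γ.pivot) := by
        simp [star_sub]
      rw [e1, e2]; exact h1
  anchors := γ.coanchors
  coanchors := γ.anchors
  anchors_mem := γ.coanchors_mem
  anchors_le := γ.coanchors_le
  coanchors_mem := γ.anchors_mem
  coanchors_le := γ.anchors_le

end ModularBridge

/-! ### Modular treks -/

/-- A modular trek: a finite chain of composable modular bridges. -/
inductive Trek (F : ℝ → ℝ → ℝ → ℝ → ℝ) (G : ℝ → ℝ → ℝ → ℝ) (H : ℝ → ℝ → ℝ) :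
    BundledMQVB F G H → BundledMQVB F G H → Type 1
  | single {ΩA ΩB : BundledMQVB F G H} (γ : ModularBridge ΩA ΩB) : Trek F G H ΩA ΩB
  | cons {ΩA ΩB ΩC : BundledMQVB F G H} (γ : ModularBridge ΩA ΩB)
      (Γ : Trek F G H ΩB ΩC) : Trek F G H ΩA ΩC

namespace Trek

/-- The length of a modular trek: the sum of the lengths of its bridges. -/
def length : ∀ {ΩA ΩB : BundledMQVB F G H}, Trek F G H ΩA ΩB → ℝ
  | _, _, .single γ => γ.length
  | _, _, .cons γ Γ => γ.length + Trek.length Γ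

/-- The modular target set of a modular trek (the set of endpoints of `l`-itineraries). -/
def mtarget : ∀ {ΩA ΩB : BundledMQVB F G H}, Trek F G H ΩA ΩB → ΩA.M → ℝ → Set ΩB.M
  | _, _, .single γ, ω, l => γ.mtarget ω l
  | _, _, .cons γ Γ, ω, l => {η | ∃ ξ ∈ γ.mtarget ω l, η ∈ Trek.mtarget Γ ξ l}

/-- The target set of a modular trek on the base algebras. -/
def atarget : ∀ {ΩA ΩB : BundledMQVB F G H}, Trek F G H ΩA ΩB → ΩA.A → ℝ → Set ΩB.A
  | _, _, .single γ, a, l => γ.atarget a l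
  | _, _, .cons γ Γ, a, l => {b | ∃ c ∈ γ.atarget a l, b ∈ Trek.atarget Γ c l}

end Trek

/-!
The polarization identity bounds `‖⟨x, y⟩‖ ≤ 4‖x‖‖y‖`, so the inner product is continuous in
each variable and the deck seminorm `dn`, a bounded supremum of continuous functions, is lower
semicontinuous. Hence the graph of each bridge target map is closed, and its values lie in the
D-ball of radius `l`, which is compact as the `l`-multiple of the unit D-ball.

For nonemptiness write `ω = l ω'` with `D(ω') ≤ 1`; the imprint gives an anchor `ω_j` with
`mkD(ω_j, ω') ≤ ι(γ) + ε`, and then `dn(ω, l η_j) ≤ l (ρ(γ) + ε)`. A minimizer of the lower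
semicontinuous function `dn(ω, ·)` on the compact D-ball therefore lies in the target set.

Along a trek, the graph of the target map is the composite of the bridge graphs; composing
closed relations through a compact set gives a closed relation, so by induction the trek target
set is a closed subset of the compact D-ball.
-/

theorem isClosed_relComp_of_isCompact {X Y Z : Type*} [TopologicalSpace X] [TopologicalSpace Y]
    [TopologicalSpace Z] {K : Set Y} (hK : IsCompact K) {R : Set (X × Y)} {S : Set (Y × Z)}
    (hR : IsClosed R) (hS : IsClosed S) (hRK : ∀ p ∈ R, p.2 ∈ K) :
    IsClosed {q : X × Z | ∃ y, (q.1, y) ∈ R ∧ (y, q.2) ∈ S} := by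
  have : CompactSpace K := isCompact_iff_compactSpace.mp hK
  have hT : IsClosed {t : (X × Z) × K | (t.1.1, (t.2 : Y)) ∈ R ∧ ((t.2 : Y), t.1.2) ∈ S} :=
    (hR.preimage (by fun_prop)).inter (hS.preimage (by fun_prop))
  convert isClosedMap_fst_of_compactSpace _ hT using 1
  ext q
  constructor
  · rintro ⟨y, hRy, hSy⟩
    exact ⟨(q, ⟨y, hRK _ hRy⟩), ⟨hRy, hSy⟩, rfl⟩
  · rintro ⟨⟨q, y, hy⟩, ⟨hRy, hSy⟩, rfl⟩
    exact ⟨y, hRy, hSy⟩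

theorem exists_lt_hausDist_add {X : Type*} {d : X → X → ℝ} {S T : Set X} (hS : S.Nonempty)
    {C : ℝ} (hd : ∀ x ∈ S, ∀ y ∈ T, 0 ≤ d x y ∧ d x y ≤ C) {y : X} (hy : y ∈ T) {ε : ℝ}
    (hε : 0 < ε) : ∃ x ∈ S, d x y < hausDist d S T + ε := by
  have hne : {s | ∃ x ∈ S, s = d x y}.Nonempty :=
    let ⟨x₀, hx₀⟩ := hS; ⟨d x₀ y, x₀, hx₀, rfl⟩
  obtain ⟨_, ⟨x, hx, rfl⟩, hlt⟩ := Real.lt_sInf_add_pos hne hε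
  refine ⟨x, hx, hlt.trans_le (add_le_add_left ?_ ε)⟩
  have hbdd : BddAbove {r | ∃ y ∈ T, r = sInf {s | ∃ x ∈ S, s = d x y}} := by
    obtain ⟨x₀, hx₀⟩ := hS
    refine ⟨C, ?_⟩
    rintro _ ⟨y', hy', rfl⟩
    have hmem : d x₀ y' ∈ {s | ∃ x ∈ S, s = d x y'} := ⟨x₀, hx₀, rfl⟩
    refine (csInf_le ⟨0, ?_⟩ hmem).trans (hd x₀ hx₀ y' hy').2
    rintro _ ⟨x, hx, rfl⟩
    exact (hd x hx y' hy').1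
  exact (le_csSup hbdd ⟨y, hy, rfl⟩).trans (le_max_right _ _)

instance (Ω : BundledMQVB F G H) : CStarAlgebra Ω.A :=
  { Ω.instRing, Ω.instStarRing, Ω.instCStar, Ω.instAlg, Ω.instStarMod, Ω.instComplete with }

instance {ΩA ΩB : BundledMQVB F G H} (γ : ModularBridge ΩA ΩB) : CStarAlgebra γ.Dalg :=
  { γ.instDRing, γ.instDStarRing, γ.instDCStar, γ.instDAlg, γ.instDStarMod, γ.instDComplete with }

namespace BundledMQVB

variable (Ω : BundledMQVB F G H)

def innLeft (ξ : Ω.M) : Ω.M →ₗ[ℂ] Ω.A where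
  toFun x := Ω.inn x ξ
  map_add' x y := Ω.inn_add_left x y ξ
  map_smul' c x := Ω.inn_smul_leftC c x ξ

@[simp]
theorem innLeft_apply (ξ x : Ω.M) : Ω.innLeft ξ x = Ω.inn x ξ := rfl

theorem inn_sub_left (x y z : Ω.M) : Ω.inn (x - y) z = Ω.inn x z - Ω.inn y z :=
  (Ω.innLeft z).map_sub x y

theorem inn_zero_left (y : Ω.M) : Ω.inn 0 y = 0 :=
  (Ω.innLeft y).map_zero

theorem inn_zero_right (x : Ω.M) : Ω.inn x 0 = 0 := by
  rw [← Ω.inn_star, Ω.inn_zero_left, star_zero]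

theorem inn_add_right (x y z : Ω.M) : Ω.inn x (y + z) = Ω.inn x y + Ω.inn x z := by
  rw [← Ω.inn_star, Ω.inn_add_left, star_add, Ω.inn_star, Ω.inn_star]

theorem inn_smul_right (c : ℂ) (x y : Ω.M) :
    Ω.inn x (c • y) = (starRingEnd ℂ c) • Ω.inn x y := by
  rw [← Ω.inn_star, Ω.inn_smul_leftC, star_smul, Ω.inn_star]
  rfl

theorem inn_sub_right (x y z : Ω.M) : Ω.inn x (y - z) = Ω.inn x y - Ω.inn x z := by
  rw [← Ω.inn_star, Ω.inn_sub_left, star_sub, Ω.inn_star, Ω.inn_star]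

theorem norm_inn_sub_right (x y z : Ω.M) :
    ‖Ω.inn z x - Ω.inn z y‖ = ‖Ω.inn x z - Ω.inn y z‖ := by
  rw [← Ω.inn_star x, ← Ω.inn_star y, ← star_sub, norm_star]

theorem norm_inn_self (x : Ω.M) : ‖Ω.inn x x‖ = ‖x‖ ^ 2 := by
  rw [Ω.norm_eq x, Real.sq_sqrt (norm_nonneg _)]

theorem norm_complex_smul (c : ℂ) (x : Ω.M) : ‖c • x‖ = ‖c‖ * ‖x‖ := by
  have hc : c * starRingEnd ℂ c = ((‖c‖ ^ 2 : ℝ) : ℂ) := by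
    rw [Complex.mul_conj, Complex.normSq_eq_norm_sq, Complex.ofReal_pow]
  rw [Ω.norm_eq, Ω.inn_smul_leftC, Ω.inn_smul_right, smul_smul, hc, norm_smul,
    Complex.norm_real, Real.norm_of_nonneg (by positivity), Real.sqrt_mul (by positivity),
    Real.sqrt_sq (norm_nonneg _), ← Ω.norm_eq]

instance : NormedSpace ℂ Ω.M where
  norm_smul_le c x := (Ω.norm_complex_smul c x).le

theorem four_smul_inn (x y : Ω.M) :
    (4 : ℂ) • Ω.inn x y =
      Ω.inn (x + y) (x + y) - Ω.inn (x - y) (x - y)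
      + Complex.I • Ω.inn (x + Complex.I • y) (x + Complex.I • y)
      - Complex.I • Ω.inn (x - Complex.I • y) (x - Complex.I • y) := by
  have hI : starRingEnd ℂ Complex.I = -Complex.I := Complex.conj_I
  simp only [Ω.inn_add_left, Ω.inn_sub_left, Ω.inn_add_right, Ω.inn_sub_right,
    Ω.inn_smul_leftC, Ω.inn_smul_right, hI]
  match_scalars <;> ring_nf <;> simp only [Complex.I_sq] <;> ring

theorem norm_inn_le_four (x y : Ω.M) (hx : ‖x‖ ≤ 1) (hy : ‖y‖ ≤ 1) : ‖Ω.inn x y‖ ≤ 4 := by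
  have hsq : ∀ z : Ω.M, ‖z‖ ≤ 2 → ‖Ω.inn z z‖ ≤ 4 := fun z hz => by
    rw [Ω.norm_inn_self]; nlinarith [norm_nonneg z]
  have hIy : ‖Complex.I • y‖ ≤ 1 := by rwa [norm_smul, Complex.norm_I, one_mul]
  have h₁ := hsq (x + y) ((norm_add_le _ _).trans (by linarith))
  have h₂ := hsq (x - y) ((norm_sub_le _ _).trans (by linarith))
  have h₃ := hsq (x + Complex.I • y) ((norm_add_le _ _).trans (by linarith))
  have h₄ := hsq (x - Complex.I • y) ((norm_sub_le _ _).trans (by linarith))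
  have h16 : ‖(4 : ℂ) • Ω.inn x y‖ ≤ 16 := by
    have h4 (a b c d : Ω.A) : ‖a - b + c - d‖ ≤ ‖a‖ + ‖b‖ + ‖c‖ + ‖d‖ :=
      calc ‖a - b + c - d‖ ≤ ‖a - b + c‖ + ‖d‖ := norm_sub_le _ _
        _ ≤ ‖a - b‖ + ‖c‖ + ‖d‖ := by gcongr; exact norm_add_le _ _
        _ ≤ ‖a‖ + ‖b‖ + ‖c‖ + ‖d‖ := by gcongr; exact norm_sub_le _ _
    rw [Ω.four_smul_inn]
    refine (h4 _ _ _ _).trans ?_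
    simp only [norm_smul, Complex.norm_I, one_mul]
    linarith
  rw [norm_smul] at h16
  norm_num at h16
  linarith

theorem norm_inn_le (x y : Ω.M) : ‖Ω.inn x y‖ ≤ 4 * ‖x‖ * ‖y‖ := by
  rcases eq_or_ne x 0 with rfl | hx
  · simp [Ω.inn_zero_left]
  rcases eq_or_ne y 0 with rfl | hy
  · simp [Ω.inn_zero_right]
  set x₁ := (‖x‖⁻¹ : ℂ) • x
  set y₁ := (‖y‖⁻¹ : ℂ) • y
  have hc : ((‖x‖ * ‖y‖ : ℝ) : ℂ) * (‖x‖ : ℂ)⁻¹ * (‖y‖ : ℂ)⁻¹ = 1 := by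
    push_cast; field_simp
  have hxy : Ω.inn x y = ((‖x‖ * ‖y‖ : ℝ) : ℂ) • Ω.inn x₁ y₁ := by
    rw [Ω.inn_smul_leftC, Ω.inn_smul_right, map_inv₀, Complex.conj_ofReal, smul_smul,
      smul_smul, hc, one_smul]
  have hx₁ : ‖x₁‖ ≤ 1 := (norm_smul_inv_norm hx).le
  have hy₁ : ‖y₁‖ ≤ 1 := (norm_smul_inv_norm hy).le
  rw [hxy, norm_smul, Complex.norm_real, Real.norm_of_nonneg (by positivity)]
  nlinarith [Ω.norm_inn_le_four x₁ y₁ hx₁ hy₁, norm_nonneg x, norm_nonneg y,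
    mul_nonneg (norm_nonneg x) (norm_nonneg y)]

theorem continuous_inn_left (ξ : Ω.M) : Continuous (Ω.inn · ξ) :=
  AddMonoidHomClass.continuous_of_bound (Ω.innLeft ξ) (4 * ‖ξ‖) fun x => by
    rw [innLeft_apply, mul_right_comm]; exact Ω.norm_inn_le x ξ

theorem continuous_inn_right (ξ : Ω.M) : Continuous (Ω.inn ξ ·) := by
  simpa only [Ω.inn_star] using (Ω.continuous_inn_left ξ).star

theorem zero_mem_Ddom : (0 : Ω.M) ∈ Ω.Ddom := by
  obtain ⟨x, hx⟩ := Ω.Ddom_dense.nonempty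
  simpa using Ω.Ddom_smul 0 x hx

theorem D_zero : Ω.D 0 = 0 := by
  obtain ⟨x, hx⟩ := Ω.Ddom_dense.nonempty
  simpa using Ω.D_smul 0 x hx

variable {Ω}

theorem zero_mem_Dball {r : ℝ} (hr : 0 ≤ r) : (0 : Ω.M) ∈ Ω.Dball r :=
  ⟨Ω.zero_mem_Ddom, Ω.D_zero.trans_le hr⟩

theorem norm_le_of_mem_Dball {r : ℝ} {x : Ω.M} (hx : x ∈ Ω.Dball r) : ‖x‖ ≤ r :=
  (Ω.norm_le_D x hx.1).trans hx.2

theorem smul_mem_Dball {r s : ℝ} (hr : 0 ≤ r) {x : Ω.M} (hx : x ∈ Ω.Dball s) :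
    (r : ℂ) • x ∈ Ω.Dball (r * s) := by
  refine ⟨Ω.Ddom_smul _ x hx.1, ?_⟩
  rw [Ω.D_smul _ x hx.1, Complex.norm_real, Real.norm_of_nonneg hr]
  exact mul_le_mul_of_nonneg_left hx.2 hr

theorem exists_eq_smul_of_mem_Dball {r : ℝ} {x : Ω.M} (hx : x ∈ Ω.Dball r) :
    ∃ y ∈ Ω.Dball 1, x = (r : ℂ) • y := by
  have hr : 0 ≤ r := (Ω.D_nonneg x).trans hx.2
  refine ⟨((r⁻¹ : ℝ) : ℂ) • x, ⟨Ω.Ddom_smul _ x hx.1, ?_⟩, ?_⟩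
  · rw [Ω.D_smul _ x hx.1, Complex.norm_real, Real.norm_of_nonneg (inv_nonneg.mpr hr)]
    exact inv_mul_le_one_of_le₀ hx.2 hr
  rcases hr.eq_or_lt with rfl | hr
  · simpa using norm_le_of_mem_Dball hx
  · rw [smul_smul, ← Complex.ofReal_mul, mul_inv_cancel₀ hr.ne', Complex.ofReal_one, one_smul]

variable (Ω)

theorem isCompact_Dball {r : ℝ} (hr : 0 ≤ r) : IsCompact (Ω.Dball r) := by
  have hball : Ω.Dball r = (fun x => (r : ℂ) • x) '' Ω.Dball 1 := by
    ext x
    constructor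
    · intro hx
      obtain ⟨y, hy, rfl⟩ := exists_eq_smul_of_mem_Dball hx
      exact ⟨y, hy, rfl⟩
    · rintro ⟨y, hy, rfl⟩
      simpa using smul_mem_Dball hr hy
  rw [hball]
  exact Ω.D_ball_compact.image (continuous_const_smul _)

theorem norm_inn_le_of_mem_Dball {ξ : Ω.M} (hξ : ξ ∈ Ω.Dball 1) (x : Ω.M) :
    ‖Ω.inn x ξ‖ ≤ 4 * ‖x‖ ∧ ‖Ω.inn ξ x‖ ≤ 4 * ‖x‖ := by
  have hξ₁ := norm_le_of_mem_Dball hξ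
  constructor
  · exact (Ω.norm_inn_le x ξ).trans (mul_le_of_le_one_right (by positivity) hξ₁)
  · exact (Ω.norm_inn_le ξ x).trans (by nlinarith [norm_nonneg x])

theorem norm_inn_sub_le {ξ : Ω.M} (hξ : ξ ∈ Ω.Dball 1) (x y : Ω.M) :
    ‖Ω.inn x ξ - Ω.inn y ξ‖ ≤ 4 * ‖x - y‖ := by
  rw [← Ω.inn_sub_left]
  exact (Ω.norm_inn_le_of_mem_Dball hξ _).1

theorem norm_inn_sub_le_mkD {ξ : Ω.M} (hξ : ξ ∈ Ω.Dball 1) (x y : Ω.M) :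
    ‖Ω.inn x ξ - Ω.inn y ξ‖ ≤ Ω.mkD x y := by
  refine le_csSup ⟨4 * ‖x - y‖, ?_⟩ ⟨ξ, hξ.1, hξ.2, rfl⟩
  rintro _ ⟨ζ, hζ, hζD, rfl⟩
  exact Ω.norm_inn_sub_le ⟨hζ, hζD⟩ x y

theorem mkD_nonneg (x y : Ω.M) : 0 ≤ Ω.mkD x y :=
  (norm_nonneg _).trans (Ω.norm_inn_sub_le_mkD (zero_mem_Dball zero_le_one) x y)

theorem mkD_le (x y : Ω.M) : Ω.mkD x y ≤ 4 * ‖x - y‖ := by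
  refine csSup_le ⟨_, 0, Ω.zero_mem_Ddom, Ω.D_zero.trans_le zero_le_one, rfl⟩ ?_
  rintro _ ⟨ζ, hζ, hζD, rfl⟩
  exact Ω.norm_inn_sub_le ⟨hζ, hζD⟩ x y

end BundledMQVB

namespace ModularBridge

open scoped CStarAlgebra
open BundledMQVB

variable {ΩA ΩB : BundledMQVB F G H} (γ : ModularBridge ΩA ΩB)

theorem bn_le_norm_add_norm (a : ΩA.A) (b : ΩB.A) : γ.bn a b ≤ ‖a‖ + ‖b‖ :=
  calc γ.bn a b ≤ ‖γ.piA a‖ * ‖γ.pivot‖ + ‖γ.pivot‖ * ‖γ.piB b‖ :=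
        (norm_sub_le _ _).trans (add_le_add (norm_mul_le _ _) (norm_mul_le _ _))
    _ ≤ ‖a‖ + ‖b‖ := by
        rw [γ.pivot_norm, mul_one, one_mul]
        exact add_le_add (NonUnitalStarAlgHom.norm_apply_le _ a)
          (NonUnitalStarAlgHom.norm_apply_le _ b)

theorem bn_le_norm_sub_add (a a' : ΩA.A) (b : ΩB.A) :
    γ.bn a b ≤ ‖a - a'‖ + γ.bn a' b := by
  have hsplit : γ.piA a * γ.pivot - γ.pivot * γ.piB b
      = γ.piA (a - a') * γ.pivot + (γ.piA a' * γ.pivot - γ.pivot * γ.piB b) := by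
    rw [map_sub, sub_mul]; abel
  calc γ.bn a b ≤ ‖γ.piA (a - a')‖ * ‖γ.pivot‖ + γ.bn a' b := by
        rw [bn, hsplit]; exact (norm_add_le _ _).trans (add_le_add (norm_mul_le _ _) le_rfl)
    _ ≤ ‖a - a'‖ + γ.bn a' b := by
        rw [γ.pivot_norm, mul_one]; gcongr; exact NonUnitalStarAlgHom.norm_apply_le _ _

theorem bn_smul (c : ℂ) (a : ΩA.A) (b : ΩB.A) : γ.bn (c • a) (c • b) = ‖c‖ * γ.bn a b := by
  rw [bn, bn, map_smul, map_smul, smul_mul_assoc, mul_smul_comm, ← smul_sub, norm_smul]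

theorem continuous_bn : Continuous fun p : ΩA.A × ΩB.A => γ.bn p.1 p.2 := by
  unfold bn
  fun_prop

def dnTerm (ω : ΩA.M) (η : ΩB.M) (k : γ.J) : ℝ :=
  max (γ.bn (ΩA.inn ω (γ.anchors k)) (ΩB.inn η (γ.coanchors k)))
      (γ.bn (ΩA.inn (γ.anchors k) ω) (ΩB.inn (γ.coanchors k) η))

theorem dn_eq_iSup (ω : ΩA.M) (η : ΩB.M) : γ.dn ω η = ⨆ k, γ.dnTerm ω η k := rfl

theorem anchors_mem_Dball (j : γ.J) : γ.anchors j ∈ ΩA.Dball 1 :=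
  ⟨γ.anchors_mem j, γ.anchors_le j⟩

theorem coanchors_mem_Dball (j : γ.J) : γ.coanchors j ∈ ΩB.Dball 1 :=
  ⟨γ.coanchors_mem j, γ.coanchors_le j⟩

theorem dnTerm_le (ω : ΩA.M) (η : ΩB.M) (k : γ.J) :
    γ.dnTerm ω η k ≤ 4 * ‖ω‖ + 4 * ‖η‖ := by
  have hA := ΩA.norm_inn_le_of_mem_Dball (γ.anchors_mem_Dball k) ω
  have hB := ΩB.norm_inn_le_of_mem_Dball (γ.coanchors_mem_Dball k) η
  exact max_le ((γ.bn_le_norm_add_norm _ _).trans (add_le_add hA.1 hB.1))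
    ((γ.bn_le_norm_add_norm _ _).trans (add_le_add hA.2 hB.2))

theorem bddAbove_range_dnTerm (ω : ΩA.M) (η : ΩB.M) : BddAbove (Set.range (γ.dnTerm ω η)) :=
  ⟨4 * ‖ω‖ + 4 * ‖η‖, Set.forall_mem_range.mpr (γ.dnTerm_le ω η)⟩

theorem dn_le_iff {ω : ΩA.M} {η : ΩB.M} {c : ℝ} : γ.dn ω η ≤ c ↔ ∀ k, γ.dnTerm ω η k ≤ c :=
  ciSup_le_iff (γ.bddAbove_range_dnTerm ω η)

theorem dnTerm_le_dn (ω : ΩA.M) (η : ΩB.M) (k : γ.J) : γ.dnTerm ω η k ≤ γ.dn ω η :=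
  le_ciSup (γ.bddAbove_range_dnTerm ω η) k

theorem dn_smul (c : ℂ) (ω : ΩA.M) (η : ΩB.M) : γ.dn (c • ω) (c • η) = ‖c‖ * γ.dn ω η := by
  have hterm : ∀ k, γ.dnTerm (c • ω) (c • η) k = ‖c‖ * γ.dnTerm ω η k := fun k => by
    simp only [dnTerm, ΩA.inn_smul_leftC, ΩB.inn_smul_leftC, ΩA.inn_smul_right,
      ΩB.inn_smul_right, bn_smul, RCLike.norm_conj, mul_max_of_nonneg _ _ (norm_nonneg c)]
  rw [dn_eq_iSup, dn_eq_iSup, Real.mul_iSup_of_nonneg (norm_nonneg c)]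
  exact iSup_congr hterm

theorem dn_le_mkD_add (ω ω' : ΩA.M) (η : ΩB.M) : γ.dn ω η ≤ ΩA.mkD ω' ω + γ.dn ω' η := by
  refine γ.dn_le_iff.mpr fun k => ?_
  have hmkD : ‖ΩA.inn ω (γ.anchors k) - ΩA.inn ω' (γ.anchors k)‖ ≤ ΩA.mkD ω' ω := by
    rw [norm_sub_rev]; exact ΩA.norm_inn_sub_le_mkD (γ.anchors_mem_Dball k) ω' ω
  have hdn := γ.dnTerm_le_dn ω' η k
  refine max_le ((γ.bn_le_norm_sub_add _ (ΩA.inn ω' (γ.anchors k)) _).trans ?_)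
    ((γ.bn_le_norm_sub_add _ (ΩA.inn (γ.anchors k) ω') _).trans ?_)
  · exact add_le_add hmkD ((le_max_left _ _).trans hdn)
  · rw [ΩA.norm_inn_sub_right]
    exact add_le_add hmkD ((le_max_right _ _).trans hdn)

theorem dn_anchors_le_modularReach (j : γ.J) :
    γ.dn (γ.anchors j) (γ.coanchors j) ≤ γ.modularReach := by
  refine le_ciSup (f := fun j => γ.dn (γ.anchors j) (γ.coanchors j)) ⟨8, ?_⟩ j
  rintro _ ⟨i, rfl⟩
  refine γ.dn_le_iff.mpr fun k => (γ.dnTerm_le _ _ k).trans ?_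
  linarith [norm_le_of_mem_Dball (γ.anchors_mem_Dball i),
    norm_le_of_mem_Dball (γ.coanchors_mem_Dball i)]

theorem exists_mkD_anchors_lt {ω : ΩA.M} (hω : ω ∈ ΩA.Dball 1) {ε : ℝ} (hε : 0 < ε) :
    ∃ j, ΩA.mkD (γ.anchors j) ω < γ.imprint + ε := by
  have hd : ∀ x ∈ Set.range γ.anchors, ∀ y ∈ ΩA.Dball 1,
      0 ≤ ΩA.mkD x y ∧ ΩA.mkD x y ≤ 8 := by
    rintro _ ⟨i, rfl⟩ y hy
    refine ⟨ΩA.mkD_nonneg _ _, (ΩA.mkD_le _ _).trans ?_⟩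
    linarith [norm_sub_le (γ.anchors i) y, norm_le_of_mem_Dball (γ.anchors_mem_Dball i),
      norm_le_of_mem_Dball hy]
  obtain ⟨_, ⟨j, rfl⟩, hlt⟩ := exists_lt_hausDist_add (Set.range_nonempty _) hd hω hε
  exact ⟨j, hlt.trans_le (add_le_add_left (le_max_left _ _) ε)⟩

theorem exists_dn_le_reach_add {l : ℝ} {ω : ΩA.M} (hω : ω ∈ ΩA.Dball l) {ε : ℝ} (hε : 0 < ε) :
    ∃ η ∈ ΩB.Dball l, γ.dn ω η ≤ l * (γ.reach + ε) := by
  have hl : 0 ≤ l := (ΩA.D_nonneg ω).trans hω.2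
  obtain ⟨ω', hω', rfl⟩ := exists_eq_smul_of_mem_Dball hω
  obtain ⟨j, hj⟩ := γ.exists_mkD_anchors_lt hω' hε
  refine ⟨(l : ℂ) • γ.coanchors j, by simpa using smul_mem_Dball hl (γ.coanchors_mem_Dball j), ?_⟩
  rw [dn_smul, Complex.norm_real, Real.norm_of_nonneg hl]
  refine mul_le_mul_of_nonneg_left ?_ hl
  calc γ.dn ω' (γ.coanchors j)
      ≤ ΩA.mkD (γ.anchors j) ω' + γ.dn (γ.anchors j) (γ.coanchors j) := γ.dn_le_mkD_add _ _ _
    _ ≤ (γ.imprint + ε) + γ.modularReach := add_le_add hj.le (γ.dn_anchors_le_modularReach j)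
    _ ≤ γ.reach + ε := by
        have : γ.modularReach + γ.imprint ≤ γ.reach := le_max_right _ _
        linarith

theorem lowerSemicontinuous_dn : LowerSemicontinuous fun p : ΩA.M × ΩB.M => γ.dn p.1 p.2 := by
  refine lowerSemicontinuous_ciSup (fun p => γ.bddAbove_range_dnTerm p.1 p.2)
    fun k => Continuous.lowerSemicontinuous ?_
  have hA := ΩA.continuous_inn_left (γ.anchors k)
  have hA' := ΩA.continuous_inn_right (γ.anchors k)
  have hB := ΩB.continuous_inn_left (γ.coanchors k)
  have hB' := ΩB.continuous_inn_right (γ.coanchors k)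
  exact (γ.continuous_bn.comp ((hA.comp continuous_fst).prodMk (hB.comp continuous_snd))).max
    (γ.continuous_bn.comp ((hA'.comp continuous_fst).prodMk (hB'.comp continuous_snd)))

theorem mtarget_subset (ω : ΩA.M) (l : ℝ) : γ.mtarget ω l ⊆ ΩB.Dball l :=
  fun _ hη => ⟨hη.1, hη.2.1⟩

theorem isClosed_mtarget_graph {l : ℝ} (hl : 0 ≤ l) :
    IsClosed {p : ΩA.M × ΩB.M | p.2 ∈ γ.mtarget p.1 l} := by
  have hgraph : {p : ΩA.M × ΩB.M | p.2 ∈ γ.mtarget p.1 l}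
      = Prod.snd ⁻¹' ΩB.Dball l ∩ {p | γ.dn p.1 p.2 ≤ l * γ.reach} :=
    Set.ext fun _ => and_assoc.symm
  rw [hgraph]
  exact ((ΩB.isCompact_Dball hl).isClosed.preimage continuous_snd).inter
    (γ.lowerSemicontinuous_dn.isClosed_preimage _)

theorem mtarget_nonempty {l : ℝ} {ω : ΩA.M} (hω : ω ∈ ΩA.Dball l) :
    (γ.mtarget ω l).Nonempty := by
  have hl : 0 ≤ l := (ΩA.D_nonneg ω).trans hω.2
  obtain ⟨η, hη, hmin⟩ := (γ.lowerSemicontinuous_dn.comp (Continuous.prodMk_right ω)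
    |>.lowerSemicontinuousOn _).exists_isMinOn ⟨0, zero_mem_Dball hl⟩ (ΩB.isCompact_Dball hl)
  refine ⟨η, hη.1, hη.2, ?_⟩
  have hlim : Filter.Tendsto (fun ε => l * (γ.reach + ε)) (nhdsWithin 0 (Set.Ioi 0))
      (nhds (l * γ.reach)) := by
    have hcont : Continuous fun ε : ℝ => l * (γ.reach + ε) := by fun_prop
    simpa using (hcont.tendsto 0).mono_left nhdsWithin_le_nhds
  refine ge_of_tendsto hlim (eventually_nhdsWithin_of_forall fun ε hε => ?_)
  obtain ⟨η', hη', hdn⟩ := γ.exists_dn_le_reach_add hω hε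
  exact (hmin hη').trans hdn

end ModularBridge

namespace Trek

variable {ΩA ΩB : BundledMQVB F G H}

theorem mtarget_subset (Γ : Trek F G H ΩA ΩB) (ω : ΩA.M) (l : ℝ) :
    Γ.mtarget ω l ⊆ ΩB.Dball l := by
  induction Γ with
  | single γ => exact γ.mtarget_subset ω l
  | cons γ Γ ih => rintro η ⟨ξ, -, hη⟩; exact ih ξ hη

theorem isClosed_mtarget_graph (Γ : Trek F G H ΩA ΩB) {l : ℝ} (hl : 0 ≤ l) :
    IsClosed {p : ΩA.M × ΩB.M | p.2 ∈ Γ.mtarget p.1 l} := by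
  induction Γ with
  | single γ => exact γ.isClosed_mtarget_graph hl
  | @cons _ ΩB' _ γ Γ ih =>
    exact isClosed_relComp_of_isCompact (ΩB'.isCompact_Dball hl) (γ.isClosed_mtarget_graph hl) ih
      fun p hp => γ.mtarget_subset p.1 l hp

theorem mtarget_nonempty (Γ : Trek F G H ΩA ΩB) {l : ℝ} {ω : ΩA.M} (hω : ω ∈ ΩA.Dball l) :
    (Γ.mtarget ω l).Nonempty := by
  induction Γ with
  | single γ => exact γ.mtarget_nonempty hω
  | cons γ Γ ih =>
    obtain ⟨ξ, hξ⟩ := γ.mtarget_nonempty hω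
    obtain ⟨η, hη⟩ := ih (γ.mtarget_subset ω l hξ)
    exact ⟨η, ξ, hξ, hη⟩

end Trek

theorem statement13_general {F : ℝ → ℝ → ℝ → ℝ → ℝ} {G : ℝ → ℝ → ℝ → ℝ} {H : ℝ → ℝ → ℝ}
    {ΩA ΩB : BundledMQVB F G H} (Γ : Trek F G H ΩA ΩB)
    (ω : ΩA.M) (hω : ω ∈ ΩA.Ddom) (l : ℝ) (hl : ΩA.D ω ≤ l) :
    (Γ.mtarget ω l).Nonempty ∧
    Γ.mtarget ω l ⊆ {η : ΩB.M | η ∈ ΩB.Ddom ∧ ΩB.D η ≤ l} ∧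
    IsCompact (Γ.mtarget ω l) := by
  have hl₀ : 0 ≤ l := (ΩA.D_nonneg ω).trans hl
  refine ⟨Γ.mtarget_nonempty ⟨hω, hl⟩, Γ.mtarget_subset ω l, ?_⟩
  exact (ΩB.isCompact_Dball hl₀).of_isClosed_subset
    ((Γ.isClosed_mtarget_graph hl₀).preimage (Continuous.prodMk_right ω)) (Γ.mtarget_subset ω l)

/-- for `ω ∈ dom(D_M)` and `l ≥ D_M(ω)`, the trek target set `t_Γ(ω|l)` is a
nonempty subset of the closed `l`-ball of the D-norm of `N`, compact for the C*-Hilbert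
norm. -/
theorem statement13 {F : ℝ → ℝ → ℝ → ℝ → ℝ} {G : ℝ → ℝ → ℝ → ℝ} {H : ℝ → ℝ → ℝ}
    (hFGH : AdmissibleTriple F G H)
    {ΩA ΩB : BundledMQVB F G H} (Γ : Trek F G H ΩA ΩB)
    (ω : ΩA.M) (hω : ω ∈ ΩA.Ddom) (l : ℝ) (hl : ΩA.D ω ≤ l) :
    (Γ.mtarget ω l).Nonempty ∧
    Γ.mtarget ω l ⊆ {η : ΩB.M | η ∈ ΩB.Ddom ∧ ΩB.D η ≤ l} ∧
    IsCompact (Γ.mtarget ω l) :=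
  statement13_general Γ ω hω l hl
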